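/- arXiv:2206.12087 — 2 statements merged into one kernel-verified Lean document; each statement's English description precedes it below -/
import Mathlib

section
/- For every k ≥ 1, there is no partial zigzag knight's path of even length ending at height k whose last step is an up-step, and no partial zigzag knight's path of odd length ending at height k whose last step is a down-step. -/
/-! A path in ℕ² starting at height 0 must begin with an up-step (knight steps never have
vertical component 0), and the zigzag condition then forces up- and down-steps to alternate.
Hence the last step is an up-step exactly when the length is odd, whatever the final height. -/

open List

/-- The four right-moves of a knight. -/
def KnightSteps : Set (ℤ × ℤ) := {(2,1), (2,-1), (1,2), (1,-2)}

/-- All partial sums of the y-coordinates are nonnegative (the path stays in ℕ²). -/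
def NonnegHeights (p : List (ℤ × ℤ)) : Prop :=
  ∀ i, 0 ≤ ((p.take i).map Prod.snd).sum

/-- A partial knight's path: steps from `KnightSteps`, never going below the x-axis. -/
def IsPartialKnight (p : List (ℤ × ℤ)) : Prop :=
  (∀ s ∈ p, s ∈ KnightSteps) ∧ NonnegHeights p

/-- Any two consecutive steps have vertical components of opposite sign. -/
def IsZigzag (p : List (ℤ × ℤ)) : Prop :=
  List.Chain' (fun a b => a.2 * b.2 < 0) p

/-- A partial zigzag knight's path. -/
def IsPartialZigzag (p : List (ℤ × ℤ)) : Prop :=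
  IsPartialKnight p ∧ IsZigzag p

/-- The height of the endpoint of a path. -/
def pathHeight (p : List (ℤ × ℤ)) : ℤ := (p.map Prod.snd).sum

/-- The size (x-coordinate of the endpoint) of a path. -/
def pathSize (p : List (ℤ × ℤ)) : ℤ := (p.map Prod.fst).sum

/-- A zigzag knight's path ending on the x-axis. -/
def IsZigzagKnightPath (p : List (ℤ × ℤ)) : Prop :=
  IsPartialZigzag p ∧ pathHeight p = 0

/-- The last step of `p` exists and is an up-step. -/
def EndsWithUp (p : List (ℤ × ℤ)) : Prop :=
  ∃ s, p.getLast? = some s ∧ 0 < s.2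

/-- The last step of `p` exists and is a down-step. -/
def EndsWithDown (p : List (ℤ × ℤ)) : Prop :=
  ∃ s, p.getLast? = some s ∧ s.2 < 0

def Estep : ℤ × ℤ := (2, 1)
def Ebar  : ℤ × ℤ := (2, -1)
def Nstep : ℤ × ℤ := (1, 2)
def Nbar  : ℤ × ℤ := (1, -2)

lemma snd_ne_zero_of_mem_knightSteps {s : ℤ × ℤ} (hs : s ∈ KnightSteps) : s.2 ≠ 0 := by
  simp only [KnightSteps, Set.mem_insert_iff, Set.mem_singleton_iff] at hs
  rcases hs with rfl | rfl | rfl | rfl <;> decide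

lemma IsPartialKnight.snd_head_pos {p : List (ℤ × ℤ)} (hp : IsPartialKnight p)
    (h : 0 < p.length) : 0 < p[0].2 := by
  obtain ⟨a, l, rfl⟩ := List.exists_cons_of_length_pos h
  have hnonneg : 0 ≤ a.2 := by simpa using hp.2 1
  exact lt_of_le_of_ne hnonneg (snd_ne_zero_of_mem_knightSteps (hp.1 a mem_cons_self)).symm

lemma IsZigzag.snd_getElem_pos_iff {p : List (ℤ × ℤ)} (hz : IsZigzag p)
    (hhead : ∀ h : 0 < p.length, 0 < p[0].2) {i : ℕ} (hi : i < p.length) :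
    0 < p[i].2 ↔ Even i := by
  induction i with
  | zero => simpa using hhead hi
  | succ i ih =>
    have hmul : p[i].2 * p[i + 1].2 < 0 := List.isChain_iff_getElem.mp hz i hi
    rw [Nat.even_add_one, ← ih (by omega)]
    rcases mul_neg_iff.mp hmul with ⟨hpos, hneg⟩ | ⟨hneg, hpos⟩
    · simp only [hpos, not_true_eq_false, iff_false, not_lt, hneg.le]
    · simp only [hpos, hneg.not_gt, not_false_eq_true]

lemma IsPartialZigzag.snd_getLast_pos_iff {p : List (ℤ × ℤ)} (hp : IsPartialZigzag p)
    (hne : p ≠ []) : 0 < (p.getLast hne).2 ↔ Odd p.length := by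
  have hlen : 0 < p.length := List.length_pos_iff.mpr hne
  rw [List.getLast_eq_getElem, hp.2.snd_getElem_pos_iff hp.1.snd_head_pos, Nat.even_sub hlen,
    ← Nat.not_even_iff_odd]
  simp

lemma IsPartialZigzag.endsWithUp_iff {p : List (ℤ × ℤ)} (hp : IsPartialZigzag p) :
    EndsWithUp p ↔ Odd p.length := by
  rcases eq_or_ne p [] with rfl | hne
  · simp [EndsWithUp]
  · simp [EndsWithUp, List.getLast?_eq_some_getLast hne, hp.snd_getLast_pos_iff hne]

lemma IsPartialZigzag.endsWithDown_iff {p : List (ℤ × ℤ)} (hp : IsPartialZigzag p) :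
    EndsWithDown p ↔ p ≠ [] ∧ Even p.length := by
  rcases eq_or_ne p [] with rfl | hne
  · simp [EndsWithDown]
  · have hlast := snd_ne_zero_of_mem_knightSteps (hp.1.1 _ (p.getLast_mem hne))
    simp only [EndsWithDown, List.getLast?_eq_some_getLast hne, Option.some.injEq,
      exists_eq_left', ne_eq, hne, not_false_eq_true, true_and,
      ← Nat.not_odd_iff_even, ← hp.snd_getLast_pos_iff hne]
    omega

theorem stmt5_general (k : ℕ) :
    (¬ ∃ p : List (ℤ × ℤ),
        IsPartialZigzag p ∧ pathHeight p = k ∧ Even p.length ∧ EndsWithUp p) ∧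
    (¬ ∃ p : List (ℤ × ℤ),
        IsPartialZigzag p ∧ pathHeight p = k ∧ Odd p.length ∧ EndsWithDown p) := by
  constructor
  · rintro ⟨p, hp, -, heven, hup⟩
    exact Nat.not_odd_iff_even.mpr heven (hp.endsWithUp_iff.mp hup)
  · rintro ⟨p, hp, -, hodd, hdown⟩
    exact Nat.not_even_iff_odd.mpr hodd (hp.endsWithDown_iff.mp hdown).2

/-- for k ≥ 1, no partial zigzag knight's path of even length ends at
height k with an up last step, and none of odd length ends at height k with a down
last step. -/
theorem stmt5 (k : ℕ) (hk : 1 ≤ k) :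
    (¬ ∃ p : List (ℤ × ℤ),
        IsPartialZigzag p ∧ pathHeight p = k ∧ Even p.length ∧ EndsWithUp p) ∧
    (¬ ∃ p : List (ℤ × ℤ),
        IsPartialZigzag p ∧ pathHeight p = k ∧ Odd p.length ∧ EndsWithDown p) :=
  stmt5_general k
end

section
/- For every k ≥ 3 and n ≥ 0, the number of partial zigzag knight's paths of size n ending at height k whose last step is an up-step equals the number of partial zigzag knight's paths of size n−2 ending at height k−1 whose last step is a down-step, plus the number of partial zigzag knight's paths of size n−1 ending at height k−2 whose last step is a down-step (counts with negative size being 0). -/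
open List

/-! Removing the last step is a bijection. A path ending with an up-step at height `k ≥ 3`
has at least two steps (one step climbs at most 2), so by the zigzag condition it is a path
ending with a down-step followed by `E` or `N`. Conversely, appending an up-step to a path
ending with a down-step keeps the zigzag condition and cannot leave the upper half-plane. -/

lemma mem_knightSteps {s : ℤ × ℤ} :
    s ∈ KnightSteps ↔ s = (2, 1) ∨ s = (2, -1) ∨ s = (1, 2) ∨ s = (1, -2) := Iff.rfl

@[simp] lemma pathHeight_append (p q : List (ℤ × ℤ)) :
    pathHeight (p ++ q) = pathHeight p + pathHeight q := by simp [pathHeight]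

@[simp] lemma pathHeight_singleton (s : ℤ × ℤ) : pathHeight [s] = s.2 := by simp [pathHeight]

@[simp] lemma pathSize_append (p q : List (ℤ × ℤ)) :
    pathSize (p ++ q) = pathSize p + pathSize q := by simp [pathSize]

@[simp] lemma pathSize_singleton (s : ℤ × ℤ) : pathSize [s] = s.1 := by simp [pathSize]

lemma nonnegHeights_concat_iff {q : List (ℤ × ℤ)} {s : ℤ × ℤ} :
    NonnegHeights (q ++ [s]) ↔ NonnegHeights q ∧ 0 ≤ pathHeight q + s.2 := by
  constructor
  · intro h
    have hq : ∀ i ≤ q.length, 0 ≤ ((q.take i).map Prod.snd).sum := fun i hi => by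
      simpa [take_append_of_le_length hi] using h i
    refine ⟨fun i => ?_, by simpa [pathHeight] using h (q.length + 1)⟩
    rcases le_total i q.length with hi | hi
    · exact hq i hi
    · simpa [take_of_length_le hi] using hq _ le_rfl
  · rintro ⟨hq, hs⟩ i
    rcases le_or_gt i q.length with hi | hi
    · simpa [take_append_of_le_length hi] using hq i
    · rw [take_of_length_le (by simpa)]
      simpa [pathHeight] using hs

lemma NonnegHeights.pathHeight_nonneg {p : List (ℤ × ℤ)} (h : NonnegHeights p) :
    0 ≤ pathHeight p := by
  simpa [pathHeight] using h p.length

lemma isZigzag_iff_isChain {p : List (ℤ × ℤ)} :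
    IsZigzag p ↔ p.IsChain (fun a b => a.2 * b.2 < 0) := Iff.rfl

lemma isPartialZigzag_concat_iff {q : List (ℤ × ℤ)} {s : ℤ × ℤ} :
    IsPartialZigzag (q ++ [s]) ↔ IsPartialZigzag q ∧ s ∈ KnightSteps ∧
      (∀ t ∈ q.getLast?, t.2 * s.2 < 0) ∧ 0 ≤ pathHeight q + s.2 := by
  simp only [IsPartialZigzag, IsPartialKnight, isZigzag_iff_isChain, nonnegHeights_concat_iff,
    isChain_append, mem_append, mem_singleton, head?_cons, Option.mem_some_iff]
  constructor
  · rintro ⟨⟨hmem, hq, hs⟩, hz, -, hlast⟩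
    exact ⟨⟨⟨fun t ht => hmem t (.inl ht), hq⟩, hz⟩, hmem s (.inr rfl),
      fun t ht => hlast t ht s rfl, hs⟩
  · rintro ⟨⟨⟨hmem, hq⟩, hz⟩, hs, hlast, hh⟩
    refine ⟨⟨fun t ht => ht.elim (hmem t) (· ▸ hs), hq, hh⟩, hz, isChain_singleton s, ?_⟩
    rintro t ht _ rfl
    exact hlast t ht

lemma finite_setOf_forall_mem_length_le {α : Type*} {S : Set α} (hS : S.Finite) (N : ℕ) :
    {l : List α | (∀ x ∈ l, x ∈ S) ∧ l.length ≤ N}.Finite := by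
  have : Finite S := hS
  refine ((List.finite_length_le S N).image (List.map Subtype.val)).subset ?_
  rintro l ⟨hl, hN⟩
  lift l to List S using hl
  exact ⟨l, by simpa using hN, rfl⟩

lemma length_le_pathSize {p : List (ℤ × ℤ)} (h : ∀ s ∈ p, s ∈ KnightSteps) :
    (p.length : ℤ) ≤ pathSize p := by
  induction p with
  | nil => simp [pathSize]
  | cons s p ih =>
    have hs : 1 ≤ s.1 := by
      rcases mem_knightSteps.1 (h s mem_cons_self) with rfl | rfl | rfl | rfl <;> norm_num
    have := ih fun t ht => h t (mem_cons_of_mem s ht)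
    simp only [length_cons, pathSize, map_cons, sum_cons] at this ⊢
    omega

lemma finite_setOf_pathSize_eq (m : ℤ) :
    {p : List (ℤ × ℤ) | (∀ s ∈ p, s ∈ KnightSteps) ∧ pathSize p = m}.Finite := by
  have hK : KnightSteps.Finite := by simp [KnightSteps]
  refine (finite_setOf_forall_mem_length_le hK m.toNat).subset ?_
  rintro p ⟨hp, rfl⟩
  exact ⟨hp, by have := length_le_pathSize hp; omega⟩

lemma IsPartialZigzag.concat_of_endsWithDown {q : List (ℤ × ℤ)} {s : ℤ × ℤ}
    (hq : IsPartialZigzag q) (hd : EndsWithDown q) (hs : s ∈ KnightSteps) (hs_up : 0 < s.2) :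
    IsPartialZigzag (q ++ [s]) := by
  obtain ⟨t, ht, ht_down⟩ := hd
  refine isPartialZigzag_concat_iff.2 ⟨hq, hs, ?_, ?_⟩
  · rintro t' ht'
    obtain rfl : t' = t := Option.some_inj.1 (ht' ▸ ht)
    exact mul_neg_of_neg_of_pos ht_down hs_up
  · have := hq.1.2.pathHeight_nonneg
    omega

lemma IsPartialZigzag.endsWithDown_of_concat {q : List (ℤ × ℤ)} {s : ℤ × ℤ}
    (h : IsPartialZigzag (q ++ [s])) (hs_up : 0 < s.2) (hq : q ≠ []) : EndsWithDown q := by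
  refine ⟨q.getLast hq, getLast?_eq_some_getLast hq, ?_⟩
  have := (isPartialZigzag_concat_iff.1 h).2.2.1 _ (getLast?_eq_some_getLast hq)
  exact neg_of_mul_neg_left this hs_up.le

@[simp] lemma endsWithUp_concat (q : List (ℤ × ℤ)) (s : ℤ × ℤ) :
    EndsWithUp (q ++ [s]) ↔ 0 < s.2 := by
  simp [EndsWithUp]

lemma EndsWithDown.ne_nil {q : List (ℤ × ℤ)} (hd : EndsWithDown q) : q ≠ [] := by
  rintro rfl
  simp [EndsWithDown] at hd

def upPaths (m c : ℤ) : Set (List (ℤ × ℤ)) :=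
  {p | IsPartialZigzag p ∧ pathSize p = m ∧ pathHeight p = c ∧ EndsWithUp p}

def downPaths (m c : ℤ) : Set (List (ℤ × ℤ)) :=
  {p | IsPartialZigzag p ∧ pathSize p = m ∧ pathHeight p = c ∧ EndsWithDown p}

lemma downPaths_finite (m c : ℤ) : (downPaths m c).Finite :=
  (finite_setOf_pathSize_eq m).subset fun _ hp => ⟨hp.1.1.1, hp.2.1⟩

lemma concat_mem_upPaths_iff {q : List (ℤ × ℤ)} {s : ℤ × ℤ} {m c : ℤ} (hs : s ∈ KnightSteps)
    (hs_up : 0 < s.2) (hq : q ≠ []) :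
    q ++ [s] ∈ upPaths m c ↔ q ∈ downPaths (m - s.1) (c - s.2) := by
  simp only [upPaths, downPaths, Set.mem_ofPred_eq, pathSize_append, pathSize_singleton,
    pathHeight_append, pathHeight_singleton, endsWithUp_concat, hs_up, and_true]
  constructor
  · rintro ⟨hp, hsize, hheight⟩
    exact ⟨(isPartialZigzag_concat_iff.1 hp).1, by omega, by omega,
      hp.endsWithDown_of_concat hs_up hq⟩
  · rintro ⟨hq', hsize, hheight, hd⟩
    exact ⟨hq'.concat_of_endsWithDown hd hs hs_up, by omega, by omega⟩

lemma exists_eq_concat_of_mem_upPaths {p : List (ℤ × ℤ)} {m c : ℤ} (hp : p ∈ upPaths m c)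
    (hc : 2 < c) : ∃ q ≠ [], p = q ++ [Estep] ∨ p = q ++ [Nstep] := by
  obtain ⟨hz, -, rfl, s, hs, hs_up⟩ := hp
  obtain ⟨q, rfl⟩ := getLast?_eq_some_iff.1 hs
  have hsK := (isPartialZigzag_concat_iff.1 hz).2.1
  have hq : q ≠ [] := by
    rintro rfl
    rcases mem_knightSteps.1 hsK with rfl | rfl | rfl | rfl <;> simp at hc
  refine ⟨q, hq, ?_⟩
  rcases mem_knightSteps.1 hsK with rfl | rfl | rfl | rfl <;> simp_all [Estep, Nstep]

lemma upPaths_eq_union {m c : ℤ} (hc : 3 ≤ c) :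
    upPaths m c = (· ++ [Estep]) '' downPaths (m - 2) (c - 1) ∪
      (· ++ [Nstep]) '' downPaths (m - 1) (c - 2) := by
  have hE : Estep ∈ KnightSteps := by simp [mem_knightSteps, Estep]
  have hN : Nstep ∈ KnightSteps := by simp [mem_knightSteps, Nstep]
  ext p
  constructor
  · intro hp
    obtain ⟨q, hq, rfl | rfl⟩ := exists_eq_concat_of_mem_upPaths hp (by omega)
    · exact .inl ⟨q, (concat_mem_upPaths_iff hE (by simp [Estep]) hq).1 hp, rfl⟩
    · exact .inr ⟨q, (concat_mem_upPaths_iff hN (by simp [Nstep]) hq).1 hp, rfl⟩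
  · rintro (⟨q, hq, rfl⟩ | ⟨q, hq, rfl⟩)
    · exact (concat_mem_upPaths_iff hE (by simp [Estep]) hq.2.2.2.ne_nil).2 hq
    · exact (concat_mem_upPaths_iff hN (by simp [Nstep]) hq.2.2.2.ne_nil).2 hq

lemma disjoint_image_concat {α : Type*} {s t : α} (h : s ≠ t) (A B : Set (List α)) :
    Disjoint ((· ++ [s]) '' A) ((· ++ [t]) '' B) := by
  rw [Set.disjoint_left]
  rintro _ ⟨p, -, rfl⟩ ⟨q, -, hpq⟩
  exact h (by simpa using (congrArg getLast? hpq).symm)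

/-- for k ≥ 3, the number of partial zigzag knight's paths of size n
ending at height k with an up last step equals the number of those of size n−2
ending at height k−1 with a down last step plus the number of those of size n−1
ending at height k−2 with a down last step. -/
theorem stmt10 (k : ℕ) (hk : 3 ≤ k) (n : ℕ) :
    Nat.card {p : List (ℤ × ℤ) //
        IsPartialZigzag p ∧ pathSize p = n ∧ pathHeight p = k ∧ EndsWithUp p}
      = Nat.card {p : List (ℤ × ℤ) // IsPartialZigzag p ∧ pathSize p = (n : ℤ) - 2 ∧
            pathHeight p = (k : ℤ) - 1 ∧ EndsWithDown p}
        + Nat.card {p : List (ℤ × ℤ) // IsPartialZigzag p ∧ pathSize p = (n : ℤ) - 1 ∧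
            pathHeight p = (k : ℤ) - 2 ∧ EndsWithDown p} := by
  change (upPaths n k).ncard = (downPaths (n - 2) (k - 1)).ncard +
    (downPaths (n - 1) (k - 2)).ncard
  rw [upPaths_eq_union (by omega), Set.ncard_union_eq
      (disjoint_image_concat (by simp [Estep, Nstep]) _ _)
      ((downPaths_finite _ _).image _) ((downPaths_finite _ _).image _),
    Set.ncard_image_of_injective _ (append_left_injective _),
    Set.ncard_image_of_injective _ (append_left_injective _)]
end
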